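/- Let S, T ∈ 𝔖 be nonempty. Then: (a) S ∼ (S∧T)U and T ∼ (S∧T)V where U and V are (+)-admissible sequences on (Γ,Λ^{S∧T}) that are unique up to ∼; (b) Supp U ∩ Supp V = ∅; (c) UV and VU are (+)-admissible sequences on (Γ,Λ^{S∧T}) and UV ∼ VU; (d) S∨T ∼ (S∧T)UV ∼ SV ∼ TU. -/

import Mathlib

namespace KP

/-! ## Quivers on a fixed vertex set `Fin n`.

An orientation is encoded by `Λ : Fin n → Fin n → ℕ`, where `Λ a b` is the number of
arrows from `a` to `b`.  The underlying graph is recorded by `edges Λ a b = Λ a b + Λ b a`. -/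

/-- The orientation `σ_x Λ` obtained by reversing every arrow incident with `x`. -/
def flipO {n : ℕ} (x : Fin n) (Λ : Fin n → Fin n → ℕ) : Fin n → Fin n → ℕ :=
  fun a b => if a = x ∨ b = x then Λ b a else Λ a b

/-- Number of edges of the underlying graph joining `a` and `b`. -/
def edges {n : ℕ} (Λ : Fin n → Fin n → ℕ) (a b : Fin n) : ℕ := Λ a b + Λ b a

/-- `x` is a sink: no arrow starts at `x`. -/
def IsSink {n : ℕ} (Λ : Fin n → Fin n → ℕ) (x : Fin n) : Prop := ∀ y, Λ x y = 0

/-- `S` is a `(+)`-admissible sequence of vertices on `(Γ, Λ)`. -/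
def Admissible {n : ℕ} (Λ : Fin n → Fin n → ℕ) : List (Fin n) → Prop
  | [] => True
  | x :: xs => IsSink Λ x ∧ Admissible (flipO x Λ) xs

/-- The orientation `Λ^S`. -/
def orientAfter {n : ℕ} (Λ : Fin n → Fin n → ℕ) : List (Fin n) → (Fin n → Fin n → ℕ)
  | [] => Λ
  | x :: xs => orientAfter (flipO x Λ) xs

/-- Elementary move: interchange two consecutive vertices not joined by an edge. -/
inductive SwapRel {n : ℕ} (E : Fin n → Fin n → ℕ) : List (Fin n) → List (Fin n) → Prop
  | swap (l₁ l₂ : List (Fin n)) (a b : Fin n) (h : E a b = 0) :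
      SwapRel E (l₁ ++ a :: b :: l₂) (l₁ ++ b :: a :: l₂)

/-- The equivalence `∼` on sequences of vertices: reflexive–transitive closure of the
(symmetric) relation `SwapRel`. -/
def Sim {n : ℕ} (E : Fin n → Fin n → ℕ) : List (Fin n) → List (Fin n) → Prop :=
  Relation.ReflTransGen (SwapRel E)

/-- The preorder `S ⪯ T` : `T ∼ S ++ U` for some `(+)`-admissible sequence `U` on `(Γ, Λ^S)`. -/
def Preceq {n : ℕ} (Λ : Fin n → Fin n → ℕ) (S T : List (Fin n)) : Prop :=
  ∃ U, Admissible (orientAfter Λ S) U ∧ Sim (edges Λ) T (S ++ U)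

/-- Support of a sequence of vertices. -/
def suppOf {n : ℕ} (S : List (Fin n)) : Set (Fin n) := {v | v ∈ S}

/-- The partial order on vertices: `x ≤ y` iff there is a path from `x` to `y` in `(Γ, Λ)`. -/
def PathLE {n : ℕ} (Λ : Fin n → Fin n → ℕ) (x y : Fin n) : Prop :=
  Relation.ReflTransGen (fun a b => Λ a b ≠ 0) x y

/-- A filter (up-closed set) of the poset `(Γ₀, Λ)`. -/
def IsFilter {n : ℕ} (Λ : Fin n → Fin n → ℕ) (F : Set (Fin n)) : Prop :=
  ∀ x ∈ F, ∀ y, PathLE Λ x y → y ∈ F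

/-- The principal filter `⟨x⟩`. -/
def upSet {n : ℕ} (Λ : Fin n → Fin n → ℕ) (x : Fin n) : Set (Fin n) := {y | PathLE Λ x y}

/-- The hull `H_Λ(F)`: the smallest filter containing `F` and every vertex joined
by an edge to a vertex of `F`. -/
def hull {n : ℕ} (Λ : Fin n → Fin n → ℕ) (F : Set (Fin n)) : Set (Fin n) :=
  {y | ∃ x, (x ∈ F ∨ ∃ z ∈ F, edges Λ z x ≠ 0) ∧ PathLE Λ x y}

/-- `segs` is a canonical form of `S` (Proposition 2.1): `S ∼ S₁S₂⋯S_r`, each segment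
consists of distinct vertices, is nonempty, and `Supp S_i = Supp (S_i S_{i+1} ⋯ S_r)`. -/
def Segments {n : ℕ} (Λ : Fin n → Fin n → ℕ) (S : List (Fin n))
    (segs : List (List (Fin n))) : Prop :=
  Admissible Λ segs.flatten ∧ Sim (edges Λ) S segs.flatten ∧
  (∀ seg ∈ segs, seg ≠ [] ∧ seg.Nodup) ∧
  ∀ i, i < segs.length → suppOf (segs.getD i []) = suppOf ((segs.drop i).flatten)

/-- `J` is (a representative of) the join `S ∨ T` (Definition 2.4):  the canonical form of `J`
has `Supp R_i = Supp S_i ∪ Supp T_i` (out-of-range segments read as `∅`). -/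
def IsJoin {n : ℕ} (Λ : Fin n → Fin n → ℕ) (S T J : List (Fin n)) : Prop :=
  ∃ CS CT CJ, Segments Λ S CS ∧ Segments Λ T CT ∧ Segments Λ J CJ ∧
    ∀ i, suppOf (CJ.getD i []) = suppOf (CS.getD i []) ∪ suppOf (CT.getD i [])

/-- `M` is (a representative of) the meet `S ∧ T` (Definition 2.4). -/
def IsMeet {n : ℕ} (Λ : Fin n → Fin n → ℕ) (S T M : List (Fin n)) : Prop :=
  ∃ CS CT CM, Segments Λ S CS ∧ Segments Λ T CT ∧ Segments Λ M CM ∧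
    ∀ i, suppOf (CM.getD i []) = suppOf (CS.getD i []) ∩ suppOf (CT.getD i [])

/-- `S` is (equivalent to) the join `T₁ ∨ ⋯ ∨ T_l` of the list of sequences `Ts`. -/
def IsJoinList {n : ℕ} (Λ : Fin n → Fin n → ℕ) : List (List (Fin n)) → List (Fin n) → Prop
  | [], S => S = []
  | T :: Ts, S => ∃ J, IsJoinList Λ Ts J ∧ IsJoin Λ T J S

/-- The segments of a canonical form of a principal sequence `S_{r,x}` (Definition 3.1). -/
def PrincipalSegs {n : ℕ} (Λ : Fin n → Fin n → ℕ) (segs : List (List (Fin n)))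
    (r : ℕ) (x : Fin n) : Prop :=
  segs.length = r ∧ 0 < r ∧
  (∀ i, i + 1 < r → suppOf (segs.getD i []) = hull Λ (suppOf (segs.getD (i+1) []))) ∧
  suppOf (segs.getD (r-1) []) = upSet Λ x

/-- `S ∼ S_{r,x}`, the principal `(+)`-admissible sequence of size `r` with
`Supp S_r = ⟨x⟩`. -/
def IsPrincipalSeq {n : ℕ} (Λ : Fin n → Fin n → ℕ) (r : ℕ) (x : Fin n)
    (S : List (Fin n)) : Prop :=
  ∃ segs, Segments Λ S segs ∧ PrincipalSegs Λ segs r x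

/-- `S` is a principal `(+)`-admissible sequence. -/
def IsPrincipal {n : ℕ} (Λ : Fin n → Fin n → ℕ) (S : List (Fin n)) : Prop :=
  ∃ r x, IsPrincipalSeq Λ r x S


/-! ## Representations of `(Γ, Λ)` over a field `k`. -/

/-- A (finite-dimensional) representation of the quiver `(Γ, Λ)` over `k`:
the space at vertex `x` is `Fin (d x) → k`, and each arrow carries a linear map. -/
structure Rep (k : Type) [Field k] (n : ℕ) (Λ : Fin n → Fin n → ℕ) where
  d : Fin n → ℕ
  f : ∀ a b : Fin n, Fin (Λ a b) → ((Fin (d a) → k) →ₗ[k] (Fin (d b) → k))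

variable {k : Type} [Field k] {n : ℕ}

/-- A morphism of representations. -/
structure RepHom {Λ : Fin n → Fin n → ℕ} (M N : Rep k n Λ) where
  g : ∀ x, (Fin (M.d x) → k) →ₗ[k] (Fin (N.d x) → k)
  comm : ∀ a b i v, g b (M.f a b i v) = N.f a b i (g a v)

/-- Isomorphism of representations. -/
def RepIso {Λ : Fin n → Fin n → ℕ} (M N : Rep k n Λ) : Prop :=
  ∃ g : ∀ x, (Fin (M.d x) → k) ≃ₗ[k] (Fin (N.d x) → k),
    ∀ a b i v, g b (M.f a b i v) = N.f a b i (g a v)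

/-- The zero representation. -/
def IsZeroRep {Λ : Fin n → Fin n → ℕ} (M : Rep k n Λ) : Prop := ∀ x, M.d x = 0

/-- Cast between the standard spaces. -/
def castL (k : Type) [Field k] {m m' : ℕ} (h : m = m') : (Fin m → k) ≃ₗ[k] (Fin m' → k) :=
  LinearEquiv.funCongrLeft k k (finCongr h.symm)

/-- The splitting `(Fin (m + p) → k) ≃ₗ (Fin m → k) × (Fin p → k)`. -/
def splitL (k : Type) [Field k] (m p : ℕ) : (Fin (m + p) → k) ≃ₗ[k] (Fin m → k) × (Fin p → k) :=
  (LinearEquiv.funCongrLeft k k finSumFinEquiv).trans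
    (LinearEquiv.sumArrowLequivProdArrow _ _ k k)

/-- Direct sum of two representations. -/
def dSum {Λ : Fin n → Fin n → ℕ} (M N : Rep k n Λ) : Rep k n Λ where
  d x := M.d x + N.d x
  f a b i :=
    (splitL k (M.d b) (N.d b)).symm.toLinearMap ∘ₗ
      (LinearMap.prodMap (M.f a b i) (N.f a b i)) ∘ₗ (splitL k (M.d a) (N.d a)).toLinearMap

/-- The zero representation (as an object). -/
def zeroRep (k : Type) [Field k] (n : ℕ) (Λ : Fin n → Fin n → ℕ) : Rep k n Λ where
  d _ := 0
  f _ _ _ := 0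

/-- Direct sum of a list of representations. -/
def dSumList {Λ : Fin n → Fin n → ℕ} (L : List (Rep k n Λ)) : Rep k n Λ :=
  L.foldr dSum (zeroRep k n Λ)

/-- `M` is indecomposable. -/
def Indecomp {Λ : Fin n → Fin n → ℕ} (M : Rep k n Λ) : Prop :=
  ¬ IsZeroRep M ∧ ∀ A B : Rep k n Λ, RepIso M (dSum A B) → IsZeroRep A ∨ IsZeroRep B

/-- `X` is a direct summand of `M`. -/
def IsSummand {Λ : Fin n → Fin n → ℕ} (X M : Rep k n Λ) : Prop :=
  ∃ Y, RepIso M (dSum X Y)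

/-! ### Reflection functors (on objects) -/

/-- Index type of the arrows ending at `x`. -/
abbrev Arin {n : ℕ} (Λ : Fin n → Fin n → ℕ) (x : Fin n) := Σ y : Fin n, Fin (Λ y x)

/-- Index type of the arrows starting at `x`. -/
abbrev Aout {n : ℕ} (Λ : Fin n → Fin n → ℕ) (x : Fin n) := Σ y : Fin n, Fin (Λ x y)

/-- The map `h : ⊕_{a : y → x} V(y) → V(x)` induced by the maps along the arrows ending at `x`. -/
noncomputable def inMap (Λ : Fin n → Fin n → ℕ) (M : Rep k n Λ) (x : Fin n) :
    ((p : Arin Λ x) → (Fin (M.d p.1) → k)) →ₗ[k] (Fin (M.d x) → k) :=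
  ∑ p : Arin Λ x, (M.f p.1 x p.2) ∘ₗ LinearMap.proj p

/-- The map `h' : V(x) → ⊕_{a : x → y} V(y)` induced by the maps along arrows starting at `x`. -/
def outMap (Λ : Fin n → Fin n → ℕ) (M : Rep k n Λ) (x : Fin n) :
    (Fin (M.d x) → k) →ₗ[k] ((p : Aout Λ x) → (Fin (M.d p.1) → k)) :=
  LinearMap.pi fun p => M.f x p.1 p.2

noncomputable def kerEquiv (Λ : Fin n → Fin n → ℕ) (M : Rep k n Λ) (x : Fin n) :
    LinearMap.ker (inMap Λ M x) ≃ₗ[k]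
      (Fin (Module.finrank k (LinearMap.ker (inMap Λ M x))) → k) :=
  (Module.finBasis k _).equivFun

noncomputable def cokerEquiv (Λ : Fin n → Fin n → ℕ) (M : Rep k n Λ) (x : Fin n) :
    (((p : Aout Λ x) → (Fin (M.d p.1) → k)) ⧸ LinearMap.range (outMap Λ M x)) ≃ₗ[k]
      (Fin (Module.finrank k (((p : Aout Λ x) → (Fin (M.d p.1) → k)) ⧸
        LinearMap.range (outMap Λ M x))) → k) :=
  (Module.finBasis k _).equivFun

/-- The positive reflection functor `F_x⁺` (on objects): the space at `x` is replaced
by the kernel of `inMap`, with the maps along the reversed arrows induced by inclusion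
followed by the projections. -/
noncomputable def reflPlus (x : Fin n) (Λ : Fin n → Fin n → ℕ) (M : Rep k n Λ) :
    Rep k n (flipO x Λ) where
  d z := if z = x then Module.finrank k (LinearMap.ker (inMap Λ M x)) else M.d z
  f a b i :=
    if ha : a = x then
      if hb : b = x then 0
      else
        (castL k (if_neg hb).symm).toLinearMap ∘ₗ
          (LinearMap.proj (φ := fun p : Arin Λ x => Fin (M.d p.1) → k)
            (⟨b, Fin.cast (by subst ha; simp [flipO]) i⟩ : Arin Λ x)) ∘ₗ
          (LinearMap.ker (inMap Λ M x)).subtype ∘ₗ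
          (kerEquiv Λ M x).symm.toLinearMap ∘ₗ (castL k (if_pos ha)).toLinearMap
    else
      if hb : b = x then 0
      else
        (castL k (if_neg hb).symm).toLinearMap ∘ₗ
          M.f a b (Fin.cast (by simp [flipO, ha, hb]) i) ∘ₗ
          (castL k (if_neg ha)).toLinearMap

/-- The negative reflection functor `F_x⁻` (on objects), presented as a map from
representations of `(Γ, σ_x Λ)` to representations of `(Γ, Λ)`: the space at `x` is
replaced by the cokernel of `outMap`. -/
noncomputable def reflMinus (x : Fin n) (Λ : Fin n → Fin n → ℕ)
    (N : Rep k n (flipO x Λ)) : Rep k n Λ where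
  d z := if z = x then
      Module.finrank k (((p : Aout (flipO x Λ) x) → (Fin (N.d p.1) → k)) ⧸
        LinearMap.range (outMap (flipO x Λ) N x))
    else N.d z
  f a b i :=
    if hb : b = x then
      if ha : a = x then 0
      else
        (castL k (if_pos hb).symm).toLinearMap ∘ₗ
          (cokerEquiv (flipO x Λ) N x).toLinearMap ∘ₗ
          (LinearMap.range (outMap (flipO x Λ) N x)).mkQ ∘ₗ
          (LinearMap.single k (fun p : Aout (flipO x Λ) x => Fin (N.d p.1) → k)
            (⟨a, Fin.cast (by subst hb; simp [flipO]) i⟩ : Aout (flipO x Λ) x)) ∘ₗ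
          (castL k (if_neg ha)).toLinearMap
    else
      if ha : a = x then 0
      else
        (castL k (if_neg hb).symm).toLinearMap ∘ₗ
          N.f a b (Fin.cast (by simp [flipO, ha, hb]) i) ∘ₗ
          (castL k (if_neg ha)).toLinearMap

/-- `F(S) = F_{x_s}⁺ ⋯ F_{x_1}⁺` applied to a representation. -/
noncomputable def FList : (S : List (Fin n)) → (Λ : Fin n → Fin n → ℕ) → Rep k n Λ →
    Rep k n (orientAfter Λ S)
  | [], _, M => M
  | x :: xs, Λ, M => FList xs (flipO x Λ) (reflPlus x Λ M)

/-- `S` annihilates `M` : `F(S) M = 0`. -/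
def Annihilates (Λ : Fin n → Fin n → ℕ) (S : List (Fin n)) (M : Rep k n Λ) : Prop :=
  IsZeroRep (FList S Λ M)

/-- `M` is preprojective: some `(+)`-admissible sequence annihilates it. -/
def Preprojective (Λ : Fin n → Fin n → ℕ) (M : Rep k n Λ) : Prop :=
  ∃ S, Admissible Λ S ∧ Annihilates Λ S M

/-- `S` is a shortest `(+)`-admissible sequence annihilating `M` : it annihilates `M` and no
proper subsequence of `S` annihilates `M`.  (This predicate is invariant under `∼`, so it
expresses `S ∼ S_M`.) -/
def IsShortestAnn (Λ : Fin n → Fin n → ℕ) (M : Rep k n Λ) (S : List (Fin n)) : Prop :=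
  Admissible Λ S ∧ Annihilates Λ S M ∧
  ∀ S', Admissible Λ S' → Annihilates Λ S' M → Preceq Λ S' S → Sim (edges Λ) S' S

/-- The simple representation `L_x` concentrated at the vertex `x`. -/
def simpleRep (Λ : Fin n → Fin n → ℕ) (x : Fin n) : Rep k n Λ where
  d z := if z = x then 1 else 0
  f _ _ _ := 0

/-- `M(S) = F_{x₁}⁻ F_{x₂}⁻ ⋯ F_{x_{s-1}}⁻ (L_{x_s})`, where `L_{x_s}` is the simple
(projective) module over `k(Γ, σ_{x_{s-1}} ⋯ σ_{x_1} Λ)` at the vertex `x_s`. -/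
noncomputable def Mof : (Λ : Fin n → Fin n → ℕ) → (S : List (Fin n)) → Rep k n Λ
  | Λ, [] => zeroRep k n Λ
  | Λ, [x] => simpleRep Λ x
  | Λ, x :: y :: ys => reflMinus x Λ (Mof (flipO x Λ) (y :: ys))

variable {n : ℕ}

/-! ## The Weyl group -/

/-- The simple reflection `σ_i` attached to a generalized Cartan matrix `A`,
as a linear endomorphism of `ℤⁿ` : `σ_i(v) = v - (∑ l, a_{il} v_l) e_i`. -/
def sigmaL (A : Fin n → Fin n → ℤ) (i : Fin n) : (Fin n → ℤ) →ₗ[ℤ] (Fin n → ℤ) where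
  toFun v := v - (∑ l, A i l * v l) • Pi.single i 1
  map_add' v w := by
    simp only [Pi.add_apply, mul_add, Finset.sum_add_distrib, add_smul]
    abel
  map_smul' c v := by
    simp only [Pi.smul_apply, smul_eq_mul, RingHom.id_apply, smul_sub]
    congr 1
    rw [smul_smul, Finset.mul_sum]
    congr 1
    exact Finset.sum_congr rfl fun l _ => by ring

theorem sigma_invol (A : Fin n → Fin n → ℤ) (hA : ∀ i, A i i = 2) (i : Fin n) :
    (sigmaL A i).comp (sigmaL A i) = LinearMap.id := by
  apply LinearMap.ext
  intro v
  simp only [LinearMap.comp_apply, LinearMap.id_apply, sigmaL, LinearMap.coe_mk, AddHom.coe_mk]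
  set c := ∑ l, A i l * v l with hc
  set s : Fin n → ℤ := Pi.single i 1 with hs
  have h1 : ∑ l, A i l * (v - c • s) l = -c := by
    have h2 : ∀ l, A i l * (v - c • s) l = A i l * v l - c * (A i l * s l) := fun l => by
      simp only [Pi.sub_apply, Pi.smul_apply, smul_eq_mul]
      ring
    rw [Finset.sum_congr rfl fun l _ => h2 l, Finset.sum_sub_distrib, ← Finset.mul_sum]
    have h3 : ∑ l, A i l * s l = 2 := by
      rw [Finset.sum_eq_single i]
      · simp [hs, hA i]
      · intro b _ hb
        simp [hs, Pi.single_eq_of_ne hb]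
      · simp
    rw [h3, ← hc]
    ring
  rw [h1]
  ext j
  simp only [Pi.sub_apply, Pi.smul_apply, smul_eq_mul]
  ring

/-- The simple reflection `σ_i` as an automorphism of `ℤⁿ`. -/
def sigmaE (A : Fin n → Fin n → ℤ) (hA : ∀ i, A i i = 2) (i : Fin n) :
    (Fin n → ℤ) ≃ₗ[ℤ] (Fin n → ℤ) :=
  LinearEquiv.ofLinear (sigmaL A i) (sigmaL A i) (sigma_invol A hA i) (sigma_invol A hA i)

/-- The length `ℓ(w)`: the least `l ≥ 0` such that `w` is a product of `l` simple
reflections. -/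
noncomputable def wordLen (A : Fin n → Fin n → ℤ) (hA : ∀ i, A i i = 2)
    (w : (Fin n → ℤ) ≃ₗ[ℤ] (Fin n → ℤ)) : ℕ :=
  sInf {l | ∃ ys : List (Fin n), ys.length = l ∧ w = (ys.map (sigmaE A hA)).prod}

/-- The word `w(S) = σ_{x_s} ⋯ σ_{x_1}` associated to a sequence `S = x₁, …, x_s`. -/
def wordOf (A : Fin n → Fin n → ℤ) (hA : ∀ i, A i i = 2) (S : List (Fin n)) :
    (Fin n → ℤ) ≃ₗ[ℤ] (Fin n → ℤ) :=
  ((S.reverse).map (sigmaE A hA)).prod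

/-- The symmetric generalized Cartan matrix of the underlying graph of `(Γ, Λ)`. -/
def cartanOf (Λ : Fin n → Fin n → ℕ) : Fin n → Fin n → ℤ :=
  fun i j => if i = j then 2 else -(edges Λ i j : ℤ)

theorem cartan_diag (Λ : Fin n → Fin n → ℕ) : ∀ i, cartanOf Λ i i = 2 := by
  intro i; simp [cartanOf]

/-- The simple reflections of the Weyl group of the underlying graph of `(Γ, Λ)`. -/
def wSig (Λ : Fin n → Fin n → ℕ) : Fin n → ((Fin n → ℤ) ≃ₗ[ℤ] (Fin n → ℤ)) :=
  sigmaE (cartanOf Λ) (cartan_diag Λ)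

/-- `w(S)` for a sequence of vertices of `(Γ, Λ)`. -/
def wordOfSeq (Λ : Fin n → Fin n → ℕ) (S : List (Fin n)) :
    (Fin n → ℤ) ≃ₗ[ℤ] (Fin n → ℤ) :=
  ((S.reverse).map (wSig Λ)).prod

/-- The word `w(S)` is reduced: `ℓ(w(S))` equals the number of letters of `S`. -/
noncomputable def IsReducedSeq (Λ : Fin n → Fin n → ℕ) (S : List (Fin n)) : Prop :=
  wordLen (cartanOf Λ) (cartan_diag Λ) (wordOfSeq Λ S) = S.length

/-! ## Dynkin graphs of types A, D, E -/

def edgeA (n : ℕ) : Fin n → Fin n → ℕ := fun i j =>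
  if (i : ℕ) + 1 = (j : ℕ) ∨ (j : ℕ) + 1 = (i : ℕ) then 1 else 0

def edgeD (n : ℕ) : Fin n → Fin n → ℕ := fun i j =>
  if ((i : ℕ) = 0 ∧ (j : ℕ) = 2) ∨ ((j : ℕ) = 0 ∧ (i : ℕ) = 2) ∨
     ((i : ℕ) = 1 ∧ (j : ℕ) = 2) ∨ ((j : ℕ) = 1 ∧ (i : ℕ) = 2) ∨
     (2 ≤ (i : ℕ) ∧ (i : ℕ) + 1 = (j : ℕ)) ∨ (2 ≤ (j : ℕ) ∧ (j : ℕ) + 1 = (i : ℕ))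
  then 1 else 0

def edgeE (n : ℕ) : Fin n → Fin n → ℕ := fun i j =>
  if ((i : ℕ) + 1 = (j : ℕ) ∧ (j : ℕ) ≤ n - 2) ∨ ((j : ℕ) + 1 = (i : ℕ) ∧ (i : ℕ) ≤ n - 2) ∨
     ((i : ℕ) = 2 ∧ (j : ℕ) = n - 1) ∨ ((j : ℕ) = 2 ∧ (i : ℕ) = n - 1)
  then 1 else 0

/-- The underlying graph (given by its edge-count function `E`) is a Dynkin diagram of
type `A`, `D`, or `E`. -/
def IsDynkinADE (n : ℕ) (E : Fin n → Fin n → ℕ) : Prop :=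
  ∃ e : Fin n ≃ Fin n,
    (∀ i j, E i j = edgeA n (e i) (e j)) ∨
    (4 ≤ n ∧ ∀ i j, E i j = edgeD n (e i) (e j)) ∨
    ((n = 6 ∨ n = 7 ∨ n = 8) ∧ ∀ i j, E i j = edgeE n (e i) (e j))

/-! ## Coxeter-sortable elements -/

/-- Lexicographic comparison of index tuples. -/
def lexLE {s : ℕ} (ι ι' : Fin s → ℕ) : Prop :=
  ι = ι' ∨ ∃ j, (∀ j', j' < j → ι j' = ι' j') ∧ ι j < ι' j

/-- `w` is `c`-sortable for the Coxeter element determined by the half-infinite word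
`cseq` (with dividers every `blockLen` letters): the lexicographically first subsequence
of `cseq` that is a reduced word for `w` defines a sequence of subsets (between adjacent
dividers) that is decreasing under inclusion. -/
def CSortable (A : Fin n → Fin n → ℤ) (hA : ∀ i, A i i = 2) (cseq : ℕ → Fin n)
    (blockLen : ℕ) (w : (Fin n → ℤ) ≃ₗ[ℤ] (Fin n → ℤ)) : Prop :=
  ∃ (s : ℕ) (ι : Fin s → ℕ), StrictMono ι ∧
    w = ((List.ofFn fun j => cseq (ι j)).map (sigmaE A hA)).prod ∧
    wordLen A hA w = s ∧
    (∀ ι' : Fin s → ℕ, StrictMono ι' →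
      w = ((List.ofFn fun j => cseq (ι' j)).map (sigmaE A hA)).prod → lexLE ι ι') ∧
    ∀ m : ℕ, {a : Fin n | ∃ j, (ι j) / blockLen = m + 1 ∧ cseq (ι j) = a} ⊆
             {a : Fin n | ∃ j, (ι j) / blockLen = m ∧ cseq (ι j) = a}


/-- A nonzero non-isomorphism between representations. -/
def RepStep {k : Type} [Field k] {n : ℕ} {Λ : Fin n → Fin n → ℕ} (X Y : Rep k n Λ) : Prop :=
  ∃ f : RepHom X Y, (∃ x v, f.g x v ≠ 0) ∧ ¬ ∀ x, Function.Bijective (f.g x)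

/-- `v` is a minimal element of `D` in the poset `(Γ₀, Λ)`. -/
def MinimalIn {n : ℕ} (Λ : Fin n → Fin n → ℕ) (D : Set (Fin n)) (v : Fin n) : Prop :=
  v ∈ D ∧ ∀ u ∈ D, PathLE Λ u v → u = v

/-- The pairs `(h, v)` of Proposition 3.2(a): `0 < h ≤ r` and `v` a minimal element of
`Supp S_h \ H_Λ(Supp S_{h+1})` (with `Supp S_{r+1} = ∅`). -/
def JoinPair {n : ℕ} (Λ : Fin n → Fin n → ℕ) (segs : List (List (Fin n)))
    (p : ℕ × Fin n) : Prop :=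
  0 < p.1 ∧ p.1 ≤ segs.length ∧
  MinimalIn Λ (suppOf (segs.getD (p.1 - 1) []) \ hull Λ (suppOf (segs.getD p.1 []))) p.2


/-! A canonical form records multiplicities: `v ∈ Supp S_i` iff `v` occurs more than `i` times
in `S`, so `S ∧ T` and `S ∨ T` carry the pointwise `min` and `max` of the multiplicities of `S`
and `T`. If an admissible `Y` contains an admissible `X` as a multiset, then `Y ∼ X W`: the first
letter of `X` is a sink, hence has no edge to the letters before its first occurrence in `Y` and
can be moved to the front. So admissible sequences with the same letters are equivalent, and `U`,
`V` are the multiset differences `S − S∧T`, `T − S∧T`, which are disjoint since `S∧T` takes the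
minimum. Disjoint admissible sequences are joined by no edge, so `UV` is admissible and
`UV ∼ VU`; finally `(S∧T)UV` has the multiplicities of `S∨T`. -/

theorem _root_.List.mem_getD_iff_lt_count_flatten {α : Type*} [DecidableEq α] :
    ∀ {segs : List (List α)}, (∀ seg ∈ segs, seg.Nodup) →
      (∀ i < segs.length, ∀ v, v ∈ segs.getD i [] ↔ v ∈ (segs.drop i).flatten) →
      ∀ i v, v ∈ segs.getD i [] ↔ i < segs.flatten.count v
  | [], _, _, i, v => by simp
  | seg :: rest, hnd, hsupp, i, v => by
    have hrest : ∀ v ∈ rest.flatten, v ∈ seg := fun v hv => by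
      simpa [hv] using hsupp 0 (by simp) v
    have ih := mem_getD_iff_lt_count_flatten (fun s hs => hnd s (.tail _ hs))
      (fun j hj => by simpa using hsupp (j + 1) (by simpa using hj))
    cases i with
    | zero => simpa [List.count_pos_iff] using fun h => hrest v h
    | succ i =>
      rw [List.getD_cons_succ, ih, List.flatten_cons, List.count_append]
      by_cases hv : v ∈ seg
      · rw [List.count_eq_one_of_mem (hnd seg List.mem_cons_self) hv]
        omega
      · rw [List.count_eq_zero.2 hv, List.count_eq_zero.2 fun h => hv (hrest v h)]
        omega

section Sim

variable {E : Fin n → Fin n → ℕ} {u v w : List (Fin n)}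

theorem Sim.trans (h₁ : Sim E u v) (h₂ : Sim E v w) : Sim E u w :=
  Relation.ReflTransGen.trans h₁ h₂

theorem Sim.symm (hE : ∀ a b, E a b = E b a) (h : Sim E u v) : Sim E v u := by
  induction h with
  | refl => exact .refl
  | tail _ hstep ih =>
    obtain ⟨l₁, l₂, a, b, hab⟩ := hstep
    exact .head (.swap l₁ l₂ b a ((hE b a).trans hab)) ih

theorem Sim.append_left (p : List (Fin n)) (h : Sim E u v) : Sim E (p ++ u) (p ++ v) := by
  refine Relation.ReflTransGen.lift (p ++ ·) (fun _ _ hstep => ?_) _ _ h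
  obtain ⟨l₁, l₂, a, b, hab⟩ := hstep
  simpa using SwapRel.swap (E := E) (p ++ l₁) l₂ a b hab

theorem Sim.append_right (q : List (Fin n)) (h : Sim E u v) : Sim E (u ++ q) (v ++ q) := by
  refine Relation.ReflTransGen.lift (· ++ q) (fun _ _ hstep => ?_) _ _ h
  obtain ⟨l₁, l₂, a, b, hab⟩ := hstep
  simpa [Function.onFun] using SwapRel.swap (E := E) l₁ (l₂ ++ q) a b hab

theorem Sim.perm (h : Sim E u v) : u.Perm v := by
  induction h with
  | refl => exact .refl _
  | tail _ hstep ih =>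
    obtain ⟨l₁, l₂, a, b, -⟩ := hstep
    exact ih.trans ((List.Perm.swap b a l₂).append_left l₁)

theorem Sim.count_append {M U : List (Fin n)} (h : Sim E u (M ++ U)) (v : Fin n) :
    u.count v = M.count v + U.count v := by
  rw [h.perm.count_eq, List.count_append]

theorem sim_append_cons {x : Fin n} :
    ∀ {A : List (Fin n)} (B : List (Fin n)), (∀ a ∈ A, E a x = 0) →
      Sim E (A ++ x :: B) (x :: (A ++ B))
  | [], _, _ => .refl
  | a :: A, B, h =>
    (Sim.append_left [a] (sim_append_cons B fun c hc => h c (.tail _ hc))).tail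
      (.swap [] (A ++ B) a x (h a List.mem_cons_self))

theorem sim_append_comm (u : List (Fin n)) :
    ∀ {v : List (Fin n)}, (∀ a ∈ u, ∀ b ∈ v, E a b = 0) → Sim E (u ++ v) (v ++ u)
  | [], _ => by simpa using .refl
  | b :: v, h =>
    (sim_append_cons v fun a ha => h a ha b List.mem_cons_self).trans
      (Sim.append_left [b] (sim_append_comm u fun a ha c hc => h a ha c (.tail _ hc)))

end Sim

section Orientation

variable {Λ : Fin n → Fin n → ℕ}

theorem edges_comm (Λ : Fin n → Fin n → ℕ) (a b : Fin n) : edges Λ a b = edges Λ b a :=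
  Nat.add_comm _ _

theorem edges_flipO (x : Fin n) (Λ : Fin n → Fin n → ℕ) : edges (flipO x Λ) = edges Λ := by
  funext a b
  simp only [edges, flipO]
  split_ifs <;> omega

theorem edges_orientAfter : ∀ (P : List (Fin n)) (Λ : Fin n → Fin n → ℕ),
    edges (orientAfter Λ P) = edges Λ
  | [], _ => rfl
  | x :: P, Λ => (edges_orientAfter P (flipO x Λ)).trans (edges_flipO x Λ)

theorem flipO_comm (x y : Fin n) (Λ : Fin n → Fin n → ℕ) :
    flipO x (flipO y Λ) = flipO y (flipO x Λ) := by
  funext a b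
  simp only [flipO]
  split_ifs <;> simp_all

theorem flipO_flipO (x : Fin n) (Λ : Fin n → Fin n → ℕ) : flipO x (flipO x Λ) = Λ := by
  funext a b
  simp only [flipO]
  split_ifs <;> simp_all

theorem IsSink.flipO {x c : Fin n} (hx : IsSink Λ x) (hxc : x ≠ c) (hcx : Λ c x = 0) :
    IsSink (flipO c Λ) x := by
  intro y
  by_cases hy : y = c
  · simp [KP.flipO, hy, hcx]
  · simp [KP.flipO, hxc, hy, hx y]

theorem admissible_append :
    ∀ (p : List (Fin n)) (Λ : Fin n → Fin n → ℕ) (q : List (Fin n)),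
      Admissible Λ (p ++ q) ↔ Admissible Λ p ∧ Admissible (orientAfter Λ p) q
  | [], _, _ => by simp [Admissible, orientAfter]
  | x :: p, Λ, q => by
    simp only [List.cons_append, Admissible, orientAfter, admissible_append p, and_assoc]

theorem admissible_swap {a b : Fin n} {l : List (Fin n)} (hab : edges Λ a b = 0)
    (h : Admissible Λ (a :: b :: l)) : Admissible Λ (b :: a :: l) := by
  obtain ⟨ha, hb, hl⟩ := h
  by_cases heq : a = b
  · subst heq
    exact ⟨ha, hb, hl⟩
  have hba : Λ b a = 0 := by simp only [edges] at hab; omega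
  refine ⟨?_, IsSink.flipO ha heq hba, flipO_comm a b Λ ▸ hl⟩
  simpa [flipO_flipO] using IsSink.flipO hb (Ne.symm heq) (by simpa [KP.flipO] using hba)

theorem Admissible.of_sim {u v : List (Fin n)} (h : Sim (edges Λ) u v) (hu : Admissible Λ u) :
    Admissible Λ v := by
  induction h with
  | refl => exact hu
  | tail _ hstep ih =>
    obtain ⟨l₁, l₂, a, b, hab⟩ := hstep
    rw [admissible_append] at ih ⊢
    exact ⟨ih.1, admissible_swap (by rwa [edges_orientAfter]) ih.2⟩

theorem edges_eq_zero_of_admissible_append_cons {x : Fin n} {B : List (Fin n)} :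
    ∀ {A : List (Fin n)} {Λ : Fin n → Fin n → ℕ}, IsSink Λ x → x ∉ A →
      Admissible Λ (A ++ x :: B) → ∀ a ∈ A, edges Λ a x = 0
  | [], _, _, _, _, a, ha => absurd ha List.not_mem_nil
  | c :: A, Λ, hx, hxA, ⟨hc, hrest⟩, a, ha => by
    have hxc : x ≠ c := fun h => hxA (h ▸ List.mem_cons_self)
    rcases List.mem_cons.1 ha with rfl | ha
    · simp [edges, hc x, hx a]
    · rw [← edges_flipO c]
      exact edges_eq_zero_of_admissible_append_cons (IsSink.flipO hx hxc (hc x))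
        (fun h => hxA (.tail _ h)) hrest a ha

theorem Admissible.exists_sim_append_of_subperm :
    ∀ {X Y : List (Fin n)} {Λ : Fin n → Fin n → ℕ}, Admissible Λ X → Admissible Λ Y →
      X.Subperm Y → ∃ W, Admissible (orientAfter Λ X) W ∧ Sim (edges Λ) Y (X ++ W)
  | [], Y, _, _, hY, _ => ⟨Y, hY, .refl⟩
  | x :: X, Y, Λ, ⟨hx, hX⟩, hY, hsub => by
    obtain ⟨A, B, rfl, hxA⟩ := List.eq_append_cons_of_mem (hsub.subset List.mem_cons_self)
    have hxfirst : Sim (edges Λ) (A ++ x :: B) (x :: (A ++ B)) :=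
      sim_append_cons B (edges_eq_zero_of_admissible_append_cons hx hxA hY)
    have hAB : Admissible (flipO x Λ) (A ++ B) := (Admissible.of_sim hxfirst hY).2
    have hsub' : X.Subperm (A ++ B) :=
      (List.subperm_cons x).1 (hsub.trans List.perm_middle.subperm)
    obtain ⟨W, hW, hABW⟩ := Admissible.exists_sim_append_of_subperm hX hAB hsub'
    rw [edges_flipO] at hABW
    exact ⟨W, hW, hxfirst.trans (hABW.append_left [x])⟩

theorem Admissible.sim_of_perm {X Y : List (Fin n)} (hX : Admissible Λ X) (hY : Admissible Λ Y)
    (h : X.Perm Y) : Sim (edges Λ) Y X := by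
  obtain ⟨W, -, hYW⟩ := hX.exists_sim_append_of_subperm hY h.subperm
  have hW : W = [] := by
    have hlen := hYW.perm.length_eq
    rw [List.length_append, ← h.length_eq] at hlen
    exact List.eq_nil_of_length_eq_zero (by omega)
  simpa [hW] using hYW

theorem Admissible.congr : ∀ {Q : List (Fin n)} {Λ₁ Λ₂ : Fin n → Fin n → ℕ},
    (∀ a b, a ∈ Q ∨ b ∈ Q → Λ₁ a b = Λ₂ a b) → Admissible Λ₁ Q → Admissible Λ₂ Q
  | [], _, _, _, _ => trivial
  | x :: Q, _, _, hag, ⟨hx, hQ⟩ => by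
    refine ⟨fun y => hag x y (.inl List.mem_cons_self) ▸ hx y,
      Admissible.congr (fun a b hab => ?_) hQ⟩
    have hab' : a ∈ x :: Q ∨ b ∈ x :: Q := hab.imp (.tail _) (.tail _)
    simp only [flipO]
    split_ifs
    · exact hag b a hab'.symm
    · exact hag a b hab'

theorem Admissible.apply_eq_zero :
    ∀ {U : List (Fin n)} {Λ : Fin n → Fin n → ℕ}, Admissible Λ U →
      ∀ {a b : Fin n}, a ∈ U → b ∉ U → Λ a b = 0
  | c :: _, _, ⟨hc, hU⟩, a, b, ha, hb => by
    by_cases hac : a = c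
    · exact hac ▸ hc b
    have hbc : b ≠ c := fun h => hb (h ▸ List.mem_cons_self)
    simpa [flipO, hac, hbc] using
      Admissible.apply_eq_zero hU ((List.mem_cons.1 ha).resolve_left hac) (fun h => hb (.tail _ h))

theorem edges_eq_zero_of_disjoint {U V : List (Fin n)} (hU : Admissible Λ U)
    (hV : Admissible Λ V) (hUV : ∀ a ∈ U, a ∉ V) {a b : Fin n} (ha : a ∈ U) (hb : b ∈ V) :
    edges Λ a b = 0 := by
  simp [edges, hU.apply_eq_zero ha fun h => hUV b h hb, hV.apply_eq_zero hb (hUV a ha)]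

theorem Admissible.flipO_of_edges_eq_zero {V : List (Fin n)} {c : Fin n} (hV : Admissible Λ V)
    (hcV : c ∉ V) (hc : ∀ v ∈ V, edges Λ c v = 0) : Admissible (flipO c Λ) V := by
  refine Admissible.congr (fun a b hab => ?_) hV
  simp only [flipO]
  split_ifs with h
  · rcases h with rfl | rfl
    · have := hc b (hab.resolve_left hcV)
      simp only [edges] at this
      omega
    · have := hc a (hab.resolve_right hcV)
      simp only [edges] at this
      omega
  · rfl

theorem Admissible.append_of_disjoint {V : List (Fin n)} :
    ∀ {U : List (Fin n)} {Λ : Fin n → Fin n → ℕ}, Admissible Λ U → Admissible Λ V →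
      (∀ a ∈ U, a ∉ V) → Admissible Λ (U ++ V)
  | [], _, _, hV, _ => hV
  | c :: _, _, ⟨hc, hU⟩, hV, hUV => by
    have hcV := hUV c List.mem_cons_self
    refine ⟨hc, Admissible.append_of_disjoint hU ?_ fun a ha => hUV a (.tail _ ha)⟩
    exact hV.flipO_of_edges_eq_zero hcV fun v hv => by
      simp [edges, hc v, hV.apply_eq_zero hv hcV]

theorem Admissible.sim_of_sim_append {M S U U' : List (Fin n)}
    (hU : Admissible (orientAfter Λ M) U) (hU' : Admissible (orientAfter Λ M) U')
    (h : Sim (edges Λ) S (M ++ U)) (h' : Sim (edges Λ) S (M ++ U')) : Sim (edges Λ) U U' := by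
  have hperm := (List.perm_append_left_iff M).1 (h'.perm.symm.trans h.perm)
  simpa [edges_orientAfter] using hU'.sim_of_perm hU hperm

end Orientation

section MeetJoin

variable {Λ : Fin n → Fin n → ℕ} {S T M J : List (Fin n)}

theorem Segments.admissible {segs : List (List (Fin n))} (h : Segments Λ S segs) :
    Admissible Λ S :=
  h.1.of_sim (h.2.1.symm (edges_comm Λ))

theorem Segments.mem_getD_iff {segs : List (List (Fin n))} (h : Segments Λ S segs) (i : ℕ)
    (v : Fin n) : v ∈ suppOf (segs.getD i []) ↔ i < S.count v := by
  obtain ⟨-, hsim, hseg, hsupp⟩ := h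
  rw [hsim.perm.count_eq v]
  exact List.mem_getD_iff_lt_count_flatten (fun s hs => (hseg s hs).2)
    (fun i hi v => Set.ext_iff.1 (hsupp i hi) v) i v

theorem IsMeet.count_eq (h : IsMeet Λ S T M) (v : Fin n) :
    M.count v = min (S.count v) (T.count v) := by
  obtain ⟨CS, CT, CM, hCS, hCT, hCM, hsupp⟩ := h
  refine eq_of_forall_lt_iff fun i => ?_
  rw [lt_min_iff, ← hCM.mem_getD_iff, ← hCS.mem_getD_iff, ← hCT.mem_getD_iff, hsupp i]
  rfl

theorem IsJoin.count_eq (h : IsJoin Λ S T J) (v : Fin n) :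
    J.count v = max (S.count v) (T.count v) := by
  obtain ⟨CS, CT, CJ, hCS, hCT, hCJ, hsupp⟩ := h
  refine eq_of_forall_lt_iff fun i => ?_
  rw [lt_max_iff, ← hCJ.mem_getD_iff, ← hCS.mem_getD_iff, ← hCT.mem_getD_iff, hsupp i]
  rfl

theorem IsMeet.subperm_left (h : IsMeet Λ S T M) : M.Subperm S :=
  List.subperm_ext_iff.2 fun v _ => h.count_eq v ▸ min_le_left _ _

theorem IsMeet.subperm_right (h : IsMeet Λ S T M) : M.Subperm T :=
  List.subperm_ext_iff.2 fun v _ => h.count_eq v ▸ min_le_right _ _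

theorem IsMeet.notMem_of_sim_append {U V : List (Fin n)} (h : IsMeet Λ S T M)
    (hSU : Sim (edges Λ) S (M ++ U)) (hTV : Sim (edges Λ) T (M ++ V)) {a : Fin n} (ha : a ∈ U) :
    a ∉ V := fun hb => by
  have := List.count_pos_iff.2 ha
  have := List.count_pos_iff.2 hb
  have := h.count_eq a
  have := hSU.count_append a
  have := hTV.count_append a
  omega

theorem IsJoin.perm_append {U V : List (Fin n)} (hJ : IsJoin Λ S T J) (hM : IsMeet Λ S T M)
    (hSU : Sim (edges Λ) S (M ++ U)) (hTV : Sim (edges Λ) T (M ++ V)) :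
    (M ++ (U ++ V)).Perm J := List.perm_iff_count.2 fun v => by
  have := hJ.count_eq v
  have := hM.count_eq v
  have := hSU.count_append v
  have := hTV.count_append v
  simp only [List.count_append]
  omega

theorem IsJoin.admissible (h : IsJoin Λ S T J) : Admissible Λ J := by
  obtain ⟨_, _, _, -, -, hCJ, -⟩ := h
  exact hCJ.admissible

end MeetJoin

theorem meet_join_theorem_general
    (n : ℕ) (Λ : Fin n → Fin n → ℕ)
    (S T : List (Fin n)) (hS : Admissible Λ S) (hT : Admissible Λ T) :
    ∀ MT : List (Fin n), IsMeet Λ S T MT → Admissible Λ MT →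
      ∃ U V : List (Fin n),
        Admissible (orientAfter Λ MT) U ∧ Admissible (orientAfter Λ MT) V ∧
        Sim (edges Λ) S (MT ++ U) ∧ Sim (edges Λ) T (MT ++ V) ∧
        (∀ U', Admissible (orientAfter Λ MT) U' → Sim (edges Λ) S (MT ++ U') →
          Sim (edges Λ) U U') ∧
        (∀ V', Admissible (orientAfter Λ MT) V' → Sim (edges Λ) T (MT ++ V') →
          Sim (edges Λ) V V') ∧
        suppOf U ∩ suppOf V = ∅ ∧
        Admissible (orientAfter Λ MT) (U ++ V) ∧ Admissible (orientAfter Λ MT) (V ++ U) ∧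
        Sim (edges Λ) (U ++ V) (V ++ U) ∧
        ∀ J, IsJoin Λ S T J →
          Sim (edges Λ) J (MT ++ (U ++ V)) ∧ Sim (edges Λ) J (S ++ V) ∧
          Sim (edges Λ) J (T ++ U) := by
  intro M hMeet hM
  obtain ⟨U, hU, hSU⟩ := hM.exists_sim_append_of_subperm hS hMeet.subperm_left
  obtain ⟨V, hV, hTV⟩ := hM.exists_sim_append_of_subperm hT hMeet.subperm_right
  have hdisj : ∀ a ∈ U, a ∉ V := fun _ => hMeet.notMem_of_sim_append hSU hTV
  have hUV := hU.append_of_disjoint hV hdisj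
  have hswap : Sim (edges Λ) (U ++ V) (V ++ U) := sim_append_comm U fun a ha b hb =>
    edges_orientAfter M Λ ▸ edges_eq_zero_of_disjoint hU hV hdisj ha hb
  refine ⟨U, V, hU, hV, hSU, hTV, fun U' hU' => hU.sim_of_sim_append hU' hSU,
    fun V' hV' => hV.sim_of_sim_append hV' hTV,
    Set.eq_empty_of_forall_notMem fun a ha => hdisj a ha.1 ha.2,
    hUV, hUV.of_sim (by rwa [edges_orientAfter]), hswap, fun J hJoin => ?_⟩
  have hJ := ((admissible_append M Λ _).2 ⟨hM, hUV⟩).sim_of_perm hJoin.admissible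
    (hJoin.perm_append hMeet hSU hTV)
  refine ⟨hJ, hJ.trans ?_, hJ.trans ((hswap.append_left M).trans ?_)⟩
  · simpa using (hSU.append_right V).symm (edges_comm Λ)
  · simpa using (hTV.append_right U).symm (edges_comm Λ)

theorem meet_join_theorem
    (n : ℕ) (hn : 2 ≤ n) (Λ : Fin n → Fin n → ℕ)
    (hloop : ∀ a, Λ a a = 0)
    (hconn : ∀ a b : Fin n, Relation.ReflTransGen (fun u v => edges Λ u v ≠ 0) a b)
    (hacyc : ∀ a : Fin n, ¬ Relation.TransGen (fun u v => Λ u v ≠ 0) a a)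
    (S T : List (Fin n)) (hS : Admissible Λ S) (hT : Admissible Λ T)
    (hSne : S ≠ []) (hTne : T ≠ []) :
    ∀ MT : List (Fin n), IsMeet Λ S T MT → Admissible Λ MT →
      ∃ U V : List (Fin n),
        Admissible (orientAfter Λ MT) U ∧ Admissible (orientAfter Λ MT) V ∧
        Sim (edges Λ) S (MT ++ U) ∧ Sim (edges Λ) T (MT ++ V) ∧
        (∀ U', Admissible (orientAfter Λ MT) U' → Sim (edges Λ) S (MT ++ U') →
          Sim (edges Λ) U U') ∧
        (∀ V', Admissible (orientAfter Λ MT) V' → Sim (edges Λ) T (MT ++ V') →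
          Sim (edges Λ) V V') ∧
        suppOf U ∩ suppOf V = ∅ ∧
        Admissible (orientAfter Λ MT) (U ++ V) ∧ Admissible (orientAfter Λ MT) (V ++ U) ∧
        Sim (edges Λ) (U ++ V) (V ++ U) ∧
        ∀ J, IsJoin Λ S T J →
          Sim (edges Λ) J (MT ++ (U ++ V)) ∧ Sim (edges Λ) J (S ++ V) ∧
          Sim (edges Λ) J (T ++ U) :=
  meet_join_theorem_general n Λ S T hS hT

end KP
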